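/- arXiv:2604.19930 — 2 statements merged into one kernel-verified Lean document; each statement's English description precedes it below -/
import Mathlib

section
/- Let V be a real Banach space, v* ∈ V, and let r : V → V satisfy r(v*) = 0 and be Fréchet differentiable at v* with derivative A + J, where J : V ≃L V is a continuous linear equivalence and A : V →L V is a continuous linear map. Let ρ = ‖J⁻¹ ∘ A‖ (operator norm) and assume ρ < 1. Then for every ρ' with ρ < ρ' < 1 there exists δ > 0 such that for all v with ‖v - v*‖ ≤ δ, the update N(v) = v - J⁻¹(r(v)) satisfies ‖N(v) - v*‖ ≤ ρ' · ‖v - v*‖. -/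
/-- Theorem 1 (cascaded convergence), local contraction form: if the composite residual
`r` vanishes at `v*` and is differentiable there with derivative `A + J`, where the
pivot `J` is invertible and the contraction ratio `ρ = ‖J⁻¹ ∘ A‖ < 1`, then for every
`ρ' ∈ (ρ, 1)` the cascaded update `N(v) = v - J⁻¹ r(v)` contracts the distance to `v*`
by the factor `ρ'` on some `δ`-ball around `v*`. -/
theorem cascaded_local_contraction
    {V : Type*} [NormedAddCommGroup V] [NormedSpace ℝ V] [CompleteSpace V]
    (vstar : V) (r : V → V) (hroot : r vstar = 0)
    (J : V ≃L[ℝ] V) (A : V →L[ℝ] V)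
    (hderiv : HasFDerivAt r (A + (J : V →L[ℝ] V)) vstar)
    (hρ : ‖(J.symm : V →L[ℝ] V).comp A‖ < 1) :
    ∀ ρ' : ℝ, ‖(J.symm : V →L[ℝ] V).comp A‖ < ρ' → ρ' < 1 →
      ∃ δ > 0, ∀ v : V, ‖v - vstar‖ ≤ δ →
        ‖(v - J.symm (r v)) - vstar‖ ≤ ρ' * ‖v - vstar‖ := by
  intro ρ' hρ' h1
  have hJpos : (0:ℝ) < ‖(J.symm : V →L[ℝ] V)‖ + 1 := by positivity
  set ρ := ‖(J.symm : V →L[ℝ] V).comp A‖ with hρdef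
  set c := (ρ' - ρ) / (‖(J.symm : V →L[ℝ] V)‖ + 1) with hc
  have hcpos : 0 < c := div_pos (by linarith) hJpos
  have hlo := hderiv.isLittleO.def hcpos
  rw [Metric.eventually_nhds_iff] at hlo
  obtain ⟨ε, hε, hball⟩ := hlo
  refine ⟨ε/2, by positivity, fun v hv => ?_⟩
  have hvε : dist v vstar < ε := by rw [dist_eq_norm]; linarith
  have hb := hball hvε
  simp only [hroot, sub_zero] at hb
  set x := v - vstar with hx
  set e := r v - (A + (J : V →L[ℝ] V)) x with he
  have hrv : r v = e + A x + J x := by simp [he]; abel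
  have key : (v - J.symm (r v)) - vstar
      = -((J.symm : V →L[ℝ] V).comp A) x - (J.symm : V →L[ℝ] V) e := by
    rw [hrv]
    have : J.symm (e + A x + J x) = J.symm e + J.symm (A x) + x := by
      simp [map_add]
    rw [this]
    simp only [ContinuousLinearMap.coe_comp', Function.comp_apply,
      ContinuousLinearEquiv.coe_coe, hx]
    abel
  rw [key]
  have h1' : ‖-((J.symm : V →L[ℝ] V).comp A) x - (J.symm : V →L[ℝ] V) e‖
      ≤ ρ * ‖x‖ + ‖(J.symm : V →L[ℝ] V)‖ * ‖e‖ := by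
    refine (norm_sub_le _ _).trans (add_le_add ?_ ((J.symm : V →L[ℝ] V).le_opNorm e))
    rw [norm_neg]
    exact ((J.symm : V →L[ℝ] V).comp A).le_opNorm x
  have h2' : ‖(J.symm : V →L[ℝ] V)‖ * ‖e‖ ≤ ‖(J.symm : V →L[ℝ] V)‖ * (c * ‖x‖) :=
    mul_le_mul_of_nonneg_left hb (norm_nonneg _)
  have h3' : ‖(J.symm : V →L[ℝ] V)‖ * c ≤ ρ' - ρ := by
    rw [hc]
    rw [div_eq_iff (ne_of_gt hJpos)] at *
    calc ‖(J.symm : V →L[ℝ] V)‖ * ((ρ' - ρ) / (‖(J.symm : V →L[ℝ] V)‖ + 1))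
        ≤ (‖(J.symm : V →L[ℝ] V)‖ + 1) * ((ρ' - ρ) / (‖(J.symm : V →L[ℝ] V)‖ + 1)) := by
          apply mul_le_mul_of_nonneg_right (by linarith) (le_of_lt hcpos)
      _ = ρ' - ρ := by field_simp
  nlinarith [norm_nonneg x, h1', h2']
end

section
/- Let V be a real Banach space, v* ∈ V, and let r : V → V satisfy r(v*) = 0 and be Fréchet differentiable at v* with derivative A + J, where J : V ≃L V is a continuous linear equivalence, A : V →L V is a continuous linear map, and ρ = ‖J⁻¹ ∘ A‖ < 1. Then for every ρ' with ρ < ρ' < 1 there exists δ > 0 such that every sequence (v_k) with ‖v₀ - v*‖ ≤ δ and v_{k+1} = v_k - J⁻¹(r(v_k)) satisfies ‖v_k - v*‖ ≤ (ρ')^k · ‖v₀ - v*‖ for all k, and hence v_k converges to v*. -/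
open Filter

/-- Theorem 1 (cascaded convergence), full form: under the contraction condition
`ρ = ‖J⁻¹ ∘ A‖ < 1`, every cascaded outer iteration `v_{k+1} = v_k - J⁻¹ r(v_k)`
started sufficiently close to the solution `v*` converges linearly to `v*` with
rate `ρ'` for any `ρ' ∈ (ρ, 1)`. -/
theorem cascaded_convergence
    {V : Type*} [NormedAddCommGroup V] [NormedSpace ℝ V] [CompleteSpace V]
    (vstar : V) (r : V → V) (hroot : r vstar = 0)
    (J : V ≃L[ℝ] V) (A : V →L[ℝ] V)
    (hderiv : HasFDerivAt r (A + (J : V →L[ℝ] V)) vstar)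
    (hρ : ‖(J.symm : V →L[ℝ] V).comp A‖ < 1) :
    ∀ ρ' : ℝ, ‖(J.symm : V →L[ℝ] V).comp A‖ < ρ' → ρ' < 1 →
      ∃ δ > 0, ∀ v : ℕ → V, ‖v 0 - vstar‖ ≤ δ →
        (∀ k, v (k + 1) = v k - J.symm (r (v k))) →
        (∀ k, ‖v k - vstar‖ ≤ ρ' ^ k * ‖v 0 - vstar‖) ∧
          Tendsto v atTop (nhds vstar) := by
  intro ρ' hρ' hρ'1
  set ρ := ‖(J.symm : V →L[ℝ] V).comp A‖ with hρdef
  have hρ0 : 0 ≤ ρ := norm_nonneg _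
  have hρ'0 : 0 < ρ' := lt_of_le_of_lt hρ0 hρ'
  set M := ‖(J.symm : V →L[ℝ] V)‖ with hM
  have hM0 : 0 ≤ M := norm_nonneg _
  set ε : ℝ := (ρ' - ρ) / (M + 1) with hε
  have hε0 : 0 < ε := div_pos (by linarith) (by linarith)
  have hMε : M * ε ≤ ρ' - ρ := by
    have h1 : (M + 1) * ε = ρ' - ρ := by
      rw [hε]; field_simp
    nlinarith [hε0.le]
  -- little-o estimate
  have hlo := hderiv.isLittleO
  have hev := (hlo.def hε0)
  rw [Metric.eventually_nhds_iff] at hev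
  obtain ⟨δ', hδ'0, hδ'⟩ := hev
  refine ⟨δ' / 2, by positivity, fun v hv0 hrec => ?_⟩
  set T := (A + (J : V →L[ℝ] V)) with hT
  -- one-step contraction
  have key : ∀ w : V, ‖w - vstar‖ ≤ δ' / 2 →
      ‖(w - J.symm (r w)) - vstar‖ ≤ ρ' * ‖w - vstar‖ := by
    intro w hw
    have hdist : dist w vstar < δ' := by
      rw [dist_eq_norm]; linarith
    have herr := hδ' hdist
    simp only [hroot, sub_zero] at herr
    have e2 : J.symm (T (w - vstar)) = J.symm (A (w - vstar)) + (w - vstar) := by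
      rw [hT, ContinuousLinearMap.add_apply, map_add]
      simp
    have hdecomp : (w - J.symm (r w)) - vstar
        = -(J.symm (A (w - vstar))) - J.symm (r w - T (w - vstar)) := by
      have e1 : J.symm (r w - T (w - vstar))
          = J.symm (r w) - J.symm (T (w - vstar)) := map_sub _ _ _
      rw [e1, e2]; abel
    rw [hdecomp]
    have h1 : ‖J.symm (A (w - vstar))‖ ≤ ρ * ‖w - vstar‖ := by
      have h := ((J.symm : V →L[ℝ] V).comp A).le_opNorm (w - vstar)
      simpa using h
    have h2 : ‖J.symm (r w - T (w - vstar))‖ ≤ M * (ε * ‖w - vstar‖) := by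
      calc ‖J.symm (r w - T (w - vstar))‖
          ≤ M * ‖r w - T (w - vstar)‖ := (J.symm : V →L[ℝ] V).le_opNorm _
        _ ≤ M * (ε * ‖w - vstar‖) := mul_le_mul_of_nonneg_left herr hM0
    calc ‖-(J.symm (A (w - vstar))) - J.symm (r w - T (w - vstar))‖
        ≤ ‖-(J.symm (A (w - vstar)))‖ + ‖J.symm (r w - T (w - vstar))‖ :=
          norm_sub_le _ _
      _ = ‖J.symm (A (w - vstar))‖ + ‖J.symm (r w - T (w - vstar))‖ := by
          rw [norm_neg]
      _ ≤ ρ * ‖w - vstar‖ + M * (ε * ‖w - vstar‖) := add_le_add h1 h2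
      _ ≤ ρ' * ‖w - vstar‖ := by nlinarith [norm_nonneg (w - vstar)]
  -- induction
  have hbound : ∀ k, ‖v k - vstar‖ ≤ ρ' ^ k * ‖v 0 - vstar‖ := by
    intro k
    induction k with
    | zero => simp
    | succ n ih =>
      have hsmall : ‖v n - vstar‖ ≤ δ' / 2 := by
        have hpow : ρ' ^ n ≤ 1 := pow_le_one₀ hρ'0.le hρ'1.le
        have : ρ' ^ n * ‖v 0 - vstar‖ ≤ ‖v 0 - vstar‖ := by
          nlinarith [norm_nonneg (v 0 - vstar)]
        linarith
      have hk := key (v n) hsmall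
      rw [← hrec n] at hk
      calc ‖v (n + 1) - vstar‖ ≤ ρ' * ‖v n - vstar‖ := hk
        _ ≤ ρ' * (ρ' ^ n * ‖v 0 - vstar‖) := mul_le_mul_of_nonneg_left ih hρ'0.le
        _ = ρ' ^ (n + 1) * ‖v 0 - vstar‖ := by ring
  refine ⟨hbound, ?_⟩
  have htend : Tendsto (fun k => ρ' ^ k * ‖v 0 - vstar‖) atTop (nhds 0) := by
    rw [show (0 : ℝ) = 0 * ‖v 0 - vstar‖ by ring]
    exact (tendsto_pow_atTop_nhds_zero_of_lt_one hρ'0.le hρ'1).mul_const _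
  have hn : Tendsto (fun k => ‖v k - vstar‖) atTop (nhds 0) :=
    squeeze_zero (fun k => norm_nonneg _) hbound htend
  rw [← tendsto_sub_nhds_zero_iff]
  exact tendsto_zero_iff_norm_tendsto_zero.mpr hn
end
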